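/- arXiv:2411.08247 — 2 statements merged into one kernel-verified Lean document; each statement's English description precedes it below -/
import Mathlib

section
/- For every integer k ≥ 3, the Nimber of the Toggle position P_{0,1}(2k,1) is 0; that is, the Toggle game on the generalized Petersen graph P(2k,1) in which every outer vertex has weight 1 and every inner vertex has weight 0 is a second-player win. -/
/-!
The half-turn `σ : (i, j) ↦ (i, j + k)` is an involutive automorphism of the prism `P(2k, 1)`,
and for `k ≥ 3` the closed neighbourhoods `N[v]` and `N[σ v]` are disjoint. Hence from a
`σ`-invariant position, a legal move at `v` leaves the move at `σ v` legal, and playing it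
restores `σ`-invariance. The second player wins by this mirror strategy, and `P_{0,1}(2k, 1)`
is `σ`-invariant.
-/

namespace Toggle

variable {V : Type*} [Fintype V] [DecidableEq V]

/-- The closed neighborhood `N[v]` of a vertex as a `Finset`. -/
def closedNbhd (G : SimpleGraph V) [DecidableRel G.Adj] (v : V) : Finset V :=
  insert v (G.neighborFinset v)

/-- The result of a Toggle move at `v`: flip the weight of every vertex in `N[v]`. -/
def move (G : SimpleGraph V) [DecidableRel G.Adj] (ω : V → Bool) (v : V) : V → Bool :=
  fun u => if u ∈ closedNbhd G v then !(ω u) else ω u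

/-- Total weight of a position. -/
def weight (ω : V → Bool) : ℕ := (Finset.univ.filter (fun u => ω u = true)).card

/-- Weight of a position over the closed neighborhood of `v`. -/
def nbhdWeight (G : SimpleGraph V) [DecidableRel G.Adj] (ω : V → Bool) (v : V) : ℕ :=
  ((closedNbhd G v).filter (fun u => ω u = true)).card

/-- A Toggle move at `v` is legal iff `ω v = 1` and the move strictly decreases the
weight over `N[v]`. -/
def IsLegal (G : SimpleGraph V) [DecidableRel G.Adj] (ω : V → Bool) (v : V) : Prop :=
  ω v = true ∧ nbhdWeight G (move G ω v) v < nbhdWeight G ω v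

instance (G : SimpleGraph V) [DecidableRel G.Adj] (ω : V → Bool) (v : V) :
    Decidable (IsLegal G ω v) :=
  inferInstanceAs (Decidable (ω v = true ∧ nbhdWeight G (move G ω v) v < nbhdWeight G ω v))

theorem weight_move_lt (G : SimpleGraph V) [DecidableRel G.Adj] {ω : V → Bool} {v : V}
    (h : IsLegal G ω v) : weight (move G ω v) < weight ω := by
  have key : ∀ ψ : V → Bool,
      weight ψ = ((closedNbhd G v).filter (fun u => ψ u = true)).card
        + ((Finset.univ \ closedNbhd G v).filter (fun u => ψ u = true)).card := by
    intro ψ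
    rw [weight, ← Finset.card_union_of_disjoint
      (Finset.disjoint_filter_filter Finset.disjoint_sdiff)]
    congr 1
    ext u
    simp only [Finset.mem_filter, Finset.mem_union, Finset.mem_sdiff, Finset.mem_univ,
      true_and]
    tauto
  have hout : ((Finset.univ \ closedNbhd G v).filter (fun u => move G ω v u = true))
      = ((Finset.univ \ closedNbhd G v).filter (fun u => ω u = true)) := by
    apply Finset.filter_congr
    intro u hu
    rw [Finset.mem_sdiff] at hu
    simp [move, hu.2]
  have h2 := h.2
  rw [key (move G ω v), key ω, hout]
  unfold nbhdWeight at h2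
  omega

/-- Minimal excludant of a finite set of naturals. -/
noncomputable def mex (s : Finset ℕ) : ℕ := sInf {n : ℕ | n ∉ s}

/-- The Nimber (Grundy value) of a Toggle position. -/
noncomputable def grundy (G : SimpleGraph V) [DecidableRel G.Adj] (ω : V → Bool) : ℕ :=
  mex ((Finset.univ.filter (fun v => IsLegal G ω v)).attach.image
    (fun v => grundy G (move G ω v.1)))
termination_by weight ω
decreasing_by
  have hv := v.2
  rw [Finset.mem_filter] at hv
  exact weight_move_lt G hv.2

/-- One legal Toggle move transforms `ω` into `ω'`. -/
def Step (G : SimpleGraph V) [DecidableRel G.Adj] (ω ω' : V → Bool) : Prop :=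
  ∃ v, IsLegal G ω v ∧ ω' = move G ω v

/-- `ω'` is reachable from `ω` by a (possibly empty) sequence of legal moves. -/
def Reach (G : SimpleGraph V) [DecidableRel G.Adj] (ω ω' : V → Bool) : Prop :=
  Relation.ReflTransGen (Step G) ω ω'

/-- `v` is terminally unplayable at `ω`: unplayable at `ω` and at every position
reachable from `ω`. -/
def TerminallyUnplayable (G : SimpleGraph V) [DecidableRel G.Adj] (ω : V → Bool) (v : V) :
    Prop :=
  ∀ ω', Reach G ω ω' → ¬ IsLegal G ω' v

/-- `v` is penultimately unplayable for the initial position `ω₀`: at every position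
reachable from `ω₀`, after any legal move at a vertex `u ∈ N[v]`, the vertex `v` is
terminally unplayable. -/
def PenultimatelyUnplayableAt (G : SimpleGraph V) [DecidableRel G.Adj] (ω₀ : V → Bool)
    (v : V) : Prop :=
  ∀ ω', Reach G ω₀ ω' → ∀ u ∈ closedNbhd G v, IsLegal G ω' u →
    TerminallyUnplayable G (move G ω' u) v

/-- The position `ω₀` is penultimately unplayable if every vertex is. -/
def PenultimatelyUnplayable (G : SimpleGraph V) [DecidableRel G.Adj] (ω₀ : V → Bool) :
    Prop :=
  ∀ v, PenultimatelyUnplayableAt G ω₀ v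

/-- The path graph on `Fin n`, vertices `0, 1, …, n-1` in order. -/
def pathGraph (n : ℕ) : SimpleGraph (Fin n) :=
  SimpleGraph.fromRel (fun a b => (a : ℕ) + 1 = (b : ℕ))

instance (n : ℕ) : DecidableRel (pathGraph n).Adj := fun a b =>
  decidable_of_iff _ (SimpleGraph.fromRel_adj _ a b).symm

/-- The 2×m grid graph `L_{2,m}` (0-indexed rows and columns). -/
def gridGraph (m : ℕ) : SimpleGraph (Fin 2 × Fin m) :=
  SimpleGraph.fromRel (fun a b =>
    (a.1 = b.1 ∧ (a.2 : ℕ) + 1 = (b.2 : ℕ)) ∨ (a.2 = b.2 ∧ (a.1 : ℕ) + 1 = (b.1 : ℕ)))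

instance (m : ℕ) : DecidableRel (gridGraph m).Adj := fun a b =>
  decidable_of_iff _ (SimpleGraph.fromRel_adj _ a b).symm

/-- The generalized Petersen graph `P(m,k)`; the vertex `(0, i)` is the outer vertex
`u_i` and `(1, i)` is the inner vertex `w_i` (0-indexed). -/
def petersen (m k : ℕ) : SimpleGraph (Fin 2 × Fin m) :=
  SimpleGraph.fromRel (fun a b =>
    (a.1 = 0 ∧ b.1 = 0 ∧ ((a.2 : ℕ) + 1) % m = (b.2 : ℕ)) ∨
    (a.1 = 0 ∧ b.1 = 1 ∧ a.2 = b.2) ∨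
    (a.1 = 1 ∧ b.1 = 1 ∧ ((a.2 : ℕ) + k) % m = (b.2 : ℕ)))

instance (m k : ℕ) : DecidableRel (petersen m k).Adj := fun a b =>
  decidable_of_iff _ (SimpleGraph.fromRel_adj _ a b).symm

/-- The position on `P(m,k)` where every outer vertex has weight 1 and every inner
vertex has weight 0. -/
def P01 (m : ℕ) : Fin 2 × Fin m → Bool := fun p => decide (p.1 = 0)

/-- The position on `P(m,k)` where every inner vertex has weight 1 and every outer
vertex has weight 0. -/
def P10 (m : ℕ) : Fin 2 × Fin m → Bool := fun p => decide (p.1 = 1)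

/-- The position where every vertex has weight 1. -/
def P11 (m : ℕ) : Fin 2 × Fin m → Bool := fun _ => true

/-- The Toggle position `H_m` on `L_{2,m}` (columns 0-indexed): for `m ≠ 3`, weight 0
exactly at `(0,0), (0,m-1), (1,0), (1,1), (1,m-2), (1,m-1)`; for `m = 3`, weight 0
exactly at `(0,0), (0,2), (1,0), (1,2)`. -/
def Hpos (m : ℕ) : Fin 2 × Fin m → Bool := fun p =>
  if m = 3 then !(decide ((p.2 : ℕ) = 0 ∨ (p.2 : ℕ) = 2))
  else !(decide ((p.1 = 0 ∧ ((p.2 : ℕ) = 0 ∨ (p.2 : ℕ) = m - 1)) ∨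
                 (p.1 = 1 ∧ ((p.2 : ℕ) ≤ 1 ∨ m - 2 ≤ (p.2 : ℕ)))))

/-- The Toggle position `D_m` on `L_{2,m}` (columns 0-indexed): weight 0 exactly at
`(0,0), (0,m-2), (0,m-1), (1,0), (1,1), (1,m-1)`. -/
def Dpos (m : ℕ) : Fin 2 × Fin m → Bool := fun p =>
  !(decide ((p.1 = 0 ∧ ((p.2 : ℕ) = 0 ∨ m - 2 ≤ (p.2 : ℕ))) ∨
            (p.1 = 1 ∧ ((p.2 : ℕ) ≤ 1 ∨ (p.2 : ℕ) = m - 1))))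

/-- The Nimber of the position `H_m`. -/
noncomputable def GH (m : ℕ) : ℕ := grundy (gridGraph m) (Hpos m)

/-- The Nimber of the position `D_m`. -/
noncomputable def GD (m : ℕ) : ℕ := grundy (gridGraph m) (Dpos m)

/-- The cycle graph `C_m` on `Fin m`. -/
def cycleGraph (m : ℕ) : SimpleGraph (Fin m) :=
  SimpleGraph.fromRel (fun a b => ((a : ℕ) + 1) % m = (b : ℕ))

open scoped Classical in
/-- The Nimber of a position of Jacob's Ladder on `C_m`: a position is the `Finset` of
not-yet-removed vertices, and a move at a remaining vertex `v` removes all remaining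
vertices at distance at most 2 from `v` in `C_m`. -/
noncomputable def jlGrundy (m : ℕ) (S : Finset (Fin m)) : ℕ :=
  mex (S.attach.image (fun v =>
    jlGrundy m (S.filter (fun u => 2 < (cycleGraph m).dist v.1 u))))
termination_by S.card
decreasing_by
  apply Finset.card_lt_card
  rw [Finset.ssubset_iff_of_subset (Finset.filter_subset _ _)]
  exact ⟨v.1, v.2, by simp [SimpleGraph.dist_self]⟩

theorem mex_eq_zero_iff {s : Finset ℕ} : mex s = 0 ↔ 0 ∉ s := by
  refine ⟨fun h h0 => ?_, fun h => Nat.sInf_eq_zero.mpr (Or.inl h)⟩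
  obtain ⟨n, hn⟩ := Infinite.exists_notMem_finset s
  rcases Nat.sInf_eq_zero.mp h with h | h
  · exact h h0
  · exact (h ▸ hn : n ∈ (∅ : Set ℕ))

section Mirror

variable {G : SimpleGraph V} [DecidableRel G.Adj]

theorem grundy_eq_zero_iff {ω : V → Bool} :
    grundy G ω = 0 ↔ ∀ v, IsLegal G ω v → grundy G (move G ω v) ≠ 0 := by
  rw [grundy, mex_eq_zero_iff]
  simp

theorem move_apply_of_notMem {ω : V → Bool} {u v : V} (h : u ∉ closedNbhd G v) :
    move G ω v u = ω u := if_neg h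

theorem move_comm (ω : V → Bool) (v w : V) :
    move G (move G ω v) w = move G (move G ω w) v := by
  funext u
  unfold move
  split_ifs <;> rfl

theorem nbhdWeight_move_of_disjoint {ω : V → Bool} {v w : V}
    (h : Disjoint (closedNbhd G v) (closedNbhd G w)) :
    nbhdWeight G (move G ω v) w = nbhdWeight G ω w := by
  unfold nbhdWeight
  congr 1
  refine Finset.filter_congr fun u hu => ?_
  rw [move_apply_of_notMem (Finset.disjoint_right.mp h hu)]

theorem IsLegal.move_of_disjoint {ω : V → Bool} {v w : V} (hw : IsLegal G ω w)
    (h : Disjoint (closedNbhd G v) (closedNbhd G w)) : IsLegal G (move G ω v) w := by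
  refine ⟨?_, ?_⟩
  · rw [move_apply_of_notMem (Finset.disjoint_right.mp h (Finset.mem_insert_self w _))]
    exact hw.1
  · rw [move_comm, nbhdWeight_move_of_disjoint h, nbhdWeight_move_of_disjoint h]
    exact hw.2

theorem apply_mem_closedNbhd_iff (φ : G ≃g G) {u v : V} :
    φ u ∈ closedNbhd G (φ v) ↔ u ∈ closedNbhd G v := by
  simp [closedNbhd, φ.map_adj_iff]

theorem move_comp_iso (φ : G ≃g G) (ω : V → Bool) (v : V) :
    move G (ω ∘ φ) v = move G ω (φ v) ∘ φ := by
  funext u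
  simp only [move, Function.comp_apply, apply_mem_closedNbhd_iff]

theorem nbhdWeight_comp_iso (φ : G ≃g G) (ω : V → Bool) (v : V) :
    nbhdWeight G (ω ∘ φ) v = nbhdWeight G ω (φ v) := by
  have hmap : (closedNbhd G v).map φ.toEquiv.toEmbedding = closedNbhd G (φ v) := by
    ext u
    obtain ⟨u, rfl⟩ := φ.surjective u
    rw [apply_mem_closedNbhd_iff]
    exact Finset.mem_map' _
  rw [nbhdWeight, nbhdWeight, ← hmap, Finset.filter_map, Finset.card_map]
  rfl

theorem isLegal_comp_iso_iff (φ : G ≃g G) (ω : V → Bool) (v : V) :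
    IsLegal G (ω ∘ φ) v ↔ IsLegal G ω (φ v) := by
  rw [IsLegal, IsLegal, move_comp_iso, nbhdWeight_comp_iso, nbhdWeight_comp_iso]
  rfl

theorem move_move_comp_of_involutive (σ : G ≃g G) (hσ : Function.Involutive σ)
    {ω : V → Bool} (hω : ω ∘ σ = ω) (v : V) :
    move G (move G ω v) (σ v) ∘ σ = move G (move G ω v) (σ v) := by
  have hmirror : move G ω v ∘ σ = move G ω (σ v) := by
    calc move G ω v ∘ σ = move G ω (σ (σ v)) ∘ σ := by rw [hσ v]
      _ = move G (ω ∘ σ) (σ v) := (move_comp_iso σ ω (σ v)).symm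
      _ = move G ω (σ v) := by rw [hω]
  rw [← move_comp_iso, hmirror, move_comm]

theorem grundy_eq_zero_of_involutive (σ : G ≃g G) (hσ : Function.Involutive σ)
    (hdisj : ∀ v, Disjoint (closedNbhd G v) (closedNbhd G (σ v)))
    (ω : V → Bool) (hω : ω ∘ σ = ω) : grundy G ω = 0 := by
  refine grundy_eq_zero_iff.mpr fun v hv h0 => ?_
  have hσv : IsLegal G (move G ω v) (σ v) :=
    ((isLegal_comp_iso_iff σ ω v).mp (by rwa [hω])).move_of_disjoint (hdisj v)
  exact grundy_eq_zero_iff.mp h0 (σ v) hσv <|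
    grundy_eq_zero_of_involutive σ hσ hdisj _ (move_move_comp_of_involutive σ hσ hω v)
termination_by weight ω
decreasing_by
  exact (weight_move_lt G hσv).trans (weight_move_lt G hv)

end Mirror

open Fin.CommRing in
theorem _root_.Fin.add_natCast_eq_iff {m : ℕ} [NeZero m] (i j : Fin m) (c : ℕ) :
    i + (c : Fin m) = j ↔ ((i : ℕ) + c) % m = j := by
  rw [Fin.ext_iff, Fin.val_add, Fin.val_natCast, Nat.add_mod_mod]

section Petersen

open Fin.CommRing

variable {m : ℕ} [NeZero m]

def petersenRotation (m l : ℕ) [NeZero m] (r : Fin m) : petersen m l ≃g petersen m l where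
  toEquiv := (Equiv.refl _).prodCongr (Equiv.addRight r)
  map_rel_iff' := by
    rintro ⟨a, i⟩ ⟨b, j⟩
    simp only [petersen, SimpleGraph.fromRel_adj, ← Fin.add_natCast_eq_iff]
    simp [add_right_comm _ r, add_left_inj]

theorem petersenRotation_apply (l : ℕ) (r : Fin m) (p : Fin 2 × Fin m) :
    petersenRotation m l r p = (p.1, p.2 + r) := rfl

theorem P01_comp_petersenRotation (l : ℕ) (r : Fin m) :
    P01 m ∘ petersenRotation m l r = P01 m := rfl

theorem exists_eq_add_of_mem_closedNbhd_petersen_one {p q : Fin 2 × Fin m}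
    (h : p ∈ closedNbhd (petersen m 1) q) : ∃ c : ℤ, |c| ≤ 1 ∧ p.2 = q.2 + c := by
  rw [closedNbhd, Finset.mem_insert, SimpleGraph.mem_neighborFinset] at h
  simp only [petersen, SimpleGraph.fromRel_adj, ← Fin.add_natCast_eq_iff, Nat.cast_one] at h
  have hcol : p.2 = q.2 ∨ q.2 + 1 = p.2 ∨ p.2 + 1 = q.2 := by
    rcases h with rfl | ⟨_, h | h⟩ <;> tauto
  rcases hcol with h | h | h
  · exact ⟨0, by simp, by simp [h]⟩
  · exact ⟨1, le_rfl, by simp [← h]⟩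
  · exact ⟨-1, by simp, by simp [← h]⟩

theorem petersenRotation_half_involutive (k l : ℕ) [NeZero (2 * k)] :
    Function.Involutive (petersenRotation (2 * k) l k) := by
  intro p
  rw [petersenRotation_apply, petersenRotation_apply, add_assoc, ← Nat.cast_add, ← two_mul,
    CharP.cast_eq_zero (Fin (2 * k)) (2 * k), add_zero]

theorem disjoint_closedNbhd_petersenRotation_half {k : ℕ} [NeZero (2 * k)] (hk : 3 ≤ k)
    (q : Fin 2 × Fin (2 * k)) :
    Disjoint (closedNbhd (petersen (2 * k) 1) q)
      (closedNbhd (petersen (2 * k) 1) (petersenRotation (2 * k) 1 k q)) := by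
  refine Finset.disjoint_left.mpr fun p h₁ h₂ => ?_
  obtain ⟨c₁, hc₁, hp₁⟩ := exists_eq_add_of_mem_closedNbhd_petersen_one h₁
  obtain ⟨c₂, hc₂, hp₂⟩ := exists_eq_add_of_mem_closedNbhd_petersen_one h₂
  -- the column of `p` gives `k ≡ c₁ - c₂ (mod 2k)`, impossible as `|c₁ - c₂| ≤ 2 < k`
  rw [petersenRotation_apply, hp₁, add_assoc, add_right_inj, ← Int.cast_natCast,
    ← Int.cast_add, ← sub_eq_zero, ← Int.cast_sub,
    CharP.intCast_eq_zero_iff (Fin (2 * k)) (2 * k)] at hp₂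
  rw [abs_le] at hc₁ hc₂
  have := Int.eq_zero_of_dvd_of_nonneg_of_lt (by omega) (by omega) (dvd_sub_comm.mp hp₂)
  omega

end Petersen

end Toggle

/-- for `k ≥ 3`, the Nimber of `P_{0,1}(2k, 1)` is 0. -/
theorem statement15 (k : ℕ) (hk : 3 ≤ k) :
    Toggle.grundy (Toggle.petersen (2 * k) 1) (Toggle.P01 (2 * k)) = 0 := by
  have : NeZero (2 * k) := ⟨by omega⟩
  exact Toggle.grundy_eq_zero_of_involutive _ (Toggle.petersenRotation_half_involutive k 1)
    (Toggle.disjoint_closedNbhd_petersenRotation_half hk) _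
    (Toggle.P01_comp_petersenRotation 1 _)
end

section
/- In a game of Toggle starting from the position P_{0,1}(m,2) on the generalized Petersen graph P(m,2) (m ≥ 5), every vertex v that is unplayable at some reachable position is terminally unplayable at that position. -/
/-!
Every position reachable from `P01 m` is a position of Jacob's Ladder in disguise
(`IsLadderPosition`): the inner vertices of weight 1 are pairwise at cyclic distance at least 3,
and an outer vertex has weight 1 exactly when no inner vertex of weight 1 lies within distance 1
of it. At such a position no inner vertex is playable, and `u_j` is playable exactly when
`u_{j-1}, u_j, u_{j+1}` all have weight 1; playing it sets these three to 0 and `w_j` to 1, which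
keeps the invariant. Hence outer weights never increase along a game, so a vertex `u_j` with a
zero among `u_{j-1}, u_j, u_{j+1}` stays unplayable forever.
-/

namespace Toggle

open Finset

section General

variable {V : Type*} [Fintype V] [DecidableEq V] {G : SimpleGraph V} [DecidableRel G.Adj]

theorem mem_closedNbhd {v u : V} : u ∈ closedNbhd G v ↔ u = v ∨ G.Adj v u := by
  simp [closedNbhd]

/-- A move flips all of `N[v]`, so afterwards the weight of `N[v]` is its former number of zeros. -/
theorem isLegal_iff {ω : V → Bool} {v : V} :
    IsLegal G ω v ↔ ω v = true ∧
      #{u ∈ closedNbhd G v | ω u = false} < #{u ∈ closedNbhd G v | ω u = true} := by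
  have : {u ∈ closedNbhd G v | move G ω v u = true} = {u ∈ closedNbhd G v | ω u = false} :=
    filter_congr fun u hu => by simp [move, hu]
  rw [IsLegal, nbhdWeight, nbhdWeight, this]

end General

section Petersen

variable {m k : ℕ} [NeZero m]

open Fin.CommRing

theorem add_natCast_mod_eq_iff (a b : Fin m) (n : ℕ) : ((a : ℕ) + n) % m = b ↔ b = a + n := by
  rw [Fin.ext_iff, Fin.val_add, Fin.val_natCast, Nat.add_mod_mod, eq_comm]

theorem closedNbhd_petersen_outer (j : Fin m) :
    closedNbhd (petersen m k) (0, j) = {(0, j), (0, j + 1), (0, j - 1), (1, j)} := by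
  ext ⟨c, i⟩
  have := add_natCast_mod_eq_iff j i 1
  have := add_natCast_mod_eq_iff i j 1
  rw [mem_closedNbhd, petersen, SimpleGraph.fromRel_adj]
  simp only [Nat.cast_one, mem_insert, mem_singleton] at *
  fin_cases c <;> grind

theorem closedNbhd_petersen_inner (i : Fin m) :
    closedNbhd (petersen m k) (1, i) = {(1, i), (1, i + k), (1, i - k), (0, i)} := by
  ext ⟨c, j⟩
  have := add_natCast_mod_eq_iff i j k
  have := add_natCast_mod_eq_iff j i k
  rw [mem_closedNbhd, petersen, SimpleGraph.fromRel_adj]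
  simp only [mem_insert, mem_singleton] at *
  fin_cases c <;> grind

theorem move_petersen_outer_apply_outer (ω : Fin 2 × Fin m → Bool) (j x : Fin m) :
    move (petersen m k) ω (0, j) (0, x) =
      if x = j - 1 ∨ x = j ∨ x = j + 1 then !ω (0, x) else ω (0, x) := by
  simp only [move, closedNbhd_petersen_outer, mem_insert, mem_singleton, Prod.mk.injEq]
  grind

theorem move_petersen_outer_apply_inner (ω : Fin 2 × Fin m → Bool) (j x : Fin m) :
    move (petersen m k) ω (0, j) (1, x) = if x = j then !ω (1, x) else ω (1, x) := by
  simp [move, closedNbhd_petersen_outer]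

def IsLadderPosition (ω : Fin 2 × Fin m → Bool) : Prop :=
  (∀ i, ω (1, i) = true → ω (1, i + 1) = false ∧ ω (1, i + 2) = false) ∧
  ∀ j, ω (0, j) = !(ω (1, j - 1) || ω (1, j) || ω (1, j + 1))

theorem isLadderPosition_P01 : IsLadderPosition (P01 m) := by
  simp [IsLadderPosition, P01]

namespace IsLadderPosition

variable {ω ω' : Fin 2 × Fin m → Bool}

theorem inner_eq_false_of_outer (h : IsLadderPosition ω) {j : Fin m} (hj : ω (0, j) = true) :
    ω (1, j - 1) = false ∧ ω (1, j) = false ∧ ω (1, j + 1) = false := by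
  simpa [h.2 j, and_assoc] using hj

theorem not_isLegal_inner (h : IsLadderPosition ω) (i : Fin m) :
    ¬ IsLegal (petersen m 2) ω (1, i) := by
  rw [isLegal_iff, closedNbhd_petersen_inner, Nat.cast_ofNat]
  rintro ⟨hi, hlt⟩
  have hsub : ω (1, i - 2) = false := by
    by_contra! hc
    simpa [hi] using (h.1 (i - 2) (by simpa using hc)).2
  have hones : ({(1, i), (1, i + 2), (1, i - 2), (0, i)} : Finset _).filter
      (fun u => ω u = true) ⊆ {(1, i)} := by
    intro u hu
    simp only [mem_filter, mem_insert, mem_singleton] at hu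
    rcases hu with ⟨rfl | rfl | rfl | rfl, hu⟩
    · simp
    · simp [(h.1 i hi).2] at hu
    · simp [hsub] at hu
    · simp [h.2 i, hi] at hu
  have hzero : (0, i) ∈ ({(1, i), (1, i + 2), (1, i - 2), (0, i)} : Finset _).filter
      (fun u => ω u = false) := by
    simp [h.2 i, hi]
  have := (card_le_card hones).trans_eq (card_singleton _)
  have := card_pos.mpr ⟨_, hzero⟩
  omega

theorem isLegal_outer_iff (hm : 1 < m) (h : IsLadderPosition ω) (j : Fin m) :
    IsLegal (petersen m 2) ω (0, j) ↔
      ω (0, j - 1) = true ∧ ω (0, j) = true ∧ ω (0, j + 1) = true := by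
  rw [isLegal_iff, closedNbhd_petersen_outer]
  set N : Finset (Fin 2 × Fin m) := {(0, j), (0, j + 1), (0, j - 1), (1, j)}
  constructor
  · rintro ⟨hj, hlt⟩
    have hw := (h.inner_eq_false_of_outer hj).2.1
    have hsplit := card_filter_add_card_filter_not (s := N) (fun u => ω u = true)
    simp only [Bool.not_eq_true] at hsplit
    by_contra! hc
    obtain ⟨x, hx, hx0⟩ : ∃ x, (x = j - 1 ∨ x = j + 1) ∧ ω (0, x) = false := by
      by_cases h' : ω (0, j - 1) = true
      · exact ⟨j + 1, Or.inr rfl, by simpa using hc h' hj⟩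
      · exact ⟨j - 1, Or.inl rfl, by simpa using h'⟩
    have hzeros : {(1, j), (0, x)} ⊆ N.filter (fun u => ω u = false) := by
      rcases hx with rfl | rfl <;> simp [N, insert_subset_iff, hw, hx0]
    have := card_le_card hzeros
    rw [card_pair (by simp)] at this
    have : #N ≤ 4 := card_le_four
    omega
  · rintro ⟨hl, hj, hr⟩
    have hw := (h.inner_eq_false_of_outer hj).2.1
    have hne : ((0 : Fin 2), j) ≠ (0, j + 1) := by
      have : (1 : Fin m) ≠ 0 := by simp [Fin.one_eq_zero_iff]; omega
      simpa [eq_comm] using this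
    have hzeros : N.filter (fun u => ω u = false) ⊆ {(1, j)} := by
      intro u hu
      simp only [N, mem_filter, mem_insert, mem_singleton] at hu
      rcases hu with ⟨rfl | rfl | rfl | rfl, hu⟩ <;> simp_all
    have hones : {(0, j), (0, j + 1)} ⊆ N.filter (fun u => ω u = true) := by
      simp [N, insert_subset_iff, hj, hr]
    have := (card_le_card hzeros).trans_eq (card_singleton _)
    have := card_le_card hones
    rw [card_pair hne] at this
    exact ⟨hj, by omega⟩

theorem eq_true_of_move_outer (hm : 1 < m) (h : IsLadderPosition ω) {k x : Fin m}
    (hk : IsLegal (petersen m 2) ω (0, k))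
    (hx : move (petersen m 2) ω (0, k) (0, x) = true) : ω (0, x) = true := by
  obtain ⟨hl, hj, hr⟩ := (h.isLegal_outer_iff hm k).mp hk
  rw [move_petersen_outer_apply_outer] at hx
  split_ifs at hx with hxk
  · rcases hxk with rfl | rfl | rfl <;> assumption
  · exact hx

theorem move_outer (hm : 2 < m) (h : IsLadderPosition ω) {k : Fin m}
    (hk : IsLegal (petersen m 2) ω (0, k)) :
    IsLadderPosition (move (petersen m 2) ω (0, k)) := by
  obtain ⟨hl, hj, hr⟩ := (h.isLegal_outer_iff (by omega) k).mp hk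
  obtain ⟨-, hw, hwr⟩ := h.inner_eq_false_of_outer hj
  obtain ⟨hwll, hwl, -⟩ := h.inner_eq_false_of_outer hl
  obtain ⟨-, -, hwrr⟩ := h.inner_eq_false_of_outer hr
  rw [show k - 1 - 1 = k - 2 by ring] at hwll
  rw [show k + 1 + 1 = k + 2 by ring] at hwrr
  have h1 : (1 : Fin m) ≠ 0 := by simp [Fin.one_eq_zero_iff]; omega
  have h2 : (2 : Fin m) ≠ 0 := by
    rw [ne_eq, ← Nat.cast_ofNat, Fin.natCast_eq_zero]
    exact Nat.not_dvd_of_pos_of_lt two_pos hm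
  simp only [IsLadderPosition, move_petersen_outer_apply_outer, move_petersen_outer_apply_inner]
  refine ⟨fun i hi => ?_, fun x => ?_⟩
  · by_cases hik : i = k
    · subst hik
      rw [if_neg (by simpa using h1), if_neg (by simpa using h2)]
      exact ⟨hwr, hwrr⟩
    · rw [if_neg hik] at hi
      have hi1 : i + 1 ≠ k := by
        rintro rfl
        rw [add_sub_cancel_right, hi] at hwl
        exact Bool.noConfusion hwl
      have hi2 : i + 2 ≠ k := by
        rintro rfl
        rw [add_sub_cancel_right, hi] at hwll
        exact Bool.noConfusion hwll
      rw [if_neg hi1, if_neg hi2]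
      exact h.1 i hi
  · by_cases hx : x = k - 1 ∨ x = k ∨ x = k + 1
    · rw [if_pos hx]
      rcases hx with rfl | rfl | rfl <;> simp [hl, hj, hr, hw]
    · push Not at hx
      obtain ⟨hxl, hxj, hxr⟩ := hx
      have hx1 : x - 1 ≠ k := by rintro rfl; simp at hxr
      have hx2 : x + 1 ≠ k := by rintro rfl; simp at hxl
      rw [if_neg (by tauto), if_neg hx1, if_neg hxj, if_neg hx2]
      exact h.2 x

theorem reach (hm : 2 < m) (h : IsLadderPosition ω) (hr : Reach (petersen m 2) ω ω') :
    IsLadderPosition ω' ∧ ∀ x, ω' (0, x) = true → ω (0, x) = true := by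
  induction hr with
  | refl => exact ⟨h, fun _ hx => hx⟩
  | tail _ hstep ih =>
    obtain ⟨⟨c, k⟩, hlegal, rfl⟩ := hstep
    obtain ⟨h', hone⟩ := ih
    match c with
    | 0 =>
      exact ⟨h'.move_outer hm hlegal,
        fun x hx => hone x (h'.eq_true_of_move_outer (by omega) hlegal hx)⟩
    | 1 => exact absurd hlegal (h'.not_isLegal_inner k)

end IsLadderPosition

end Petersen

end Toggle

/-- in a game of Toggle on `P(m,2)` (`m ≥ 5`) starting from
`P_{0,1}(m,2)`, every vertex that is unplayable at some reachable position is
terminally unplayable at that position. -/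
theorem statement16 (m : ℕ) (hm : 5 ≤ m)
    (ω : Fin 2 × Fin m → Bool)
    (hr : Toggle.Reach (Toggle.petersen m 2) (Toggle.P01 m) ω)
    (v : Fin 2 × Fin m) (hv : ¬ Toggle.IsLegal (Toggle.petersen m 2) ω v) :
    Toggle.TerminallyUnplayable (Toggle.petersen m 2) ω v := by
  have : NeZero m := ⟨by omega⟩
  have hω := (Toggle.isLadderPosition_P01.reach (by omega) hr).1
  intro ω' hr'
  obtain ⟨hω', hone⟩ := hω.reach (by omega) hr'
  obtain ⟨c, x⟩ := v
  match c with
  | 0 =>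
    rw [hω.isLegal_outer_iff (by omega)] at hv
    rw [hω'.isLegal_outer_iff (by omega)]
    exact fun ⟨h₁, h₂, h₃⟩ => hv ⟨hone _ h₁, hone _ h₂, hone _ h₃⟩
  | 1 => exact hω'.not_isLegal_inner x
end
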